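/- For every k ≥ 1 there exists a constant C > 0 (depending only on k) such that the following holds: for every ε with 0 < ε ≤ 1/(2k) and every symmetric matrix E ∈ ℝ^{k×k} with zero diagonal and all entries of absolute value at most ε (so that I + E is positive definite), and for every convex Borel set S ⊆ ℝᵏ, |N(0, I+E)(S) − N(0, I)(S)| ≤ C·ε, where N(0, Σ) denotes the centered Gaussian measure on ℝᵏ with covariance matrix Σ. -/

import Mathlib

open MeasureTheory Matrix

/-- Density of the centered Gaussian measure `N(0, S)` on `ℝᵏ` with (positive definite)
covariance matrix `S`: `(2π)^{-k/2} det(S)^{-1/2} exp(-xᵀS⁻¹x/2)`. -/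
noncomputable def gaussDensity (k : ℕ) (S : Matrix (Fin k) (Fin k) ℝ)
    (x : Fin k → ℝ) : ℝ :=
  (Real.sqrt ((2 * Real.pi) ^ k * S.det))⁻¹ *
    Real.exp (-(∑ i, ∑ j, x i * S⁻¹ i j * x j) / 2)

/-!
The two densities are compared pointwise. Since `E` has entries at most `ε`, `‖E y‖ ≤ kε ‖y‖`
with `kε ≤ 1/2`; writing `x = (1 + E) y`, the quadratic form of `(1 + E)⁻¹` is `x ⬝ᵥ y`, which
lies within `6kε |x|²` of `|x|²` and is at least `2|x|²/9`. On the determinant side, the Leibniz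
expansion gives `|det (1 + E) - 1| ≤ k! ε`, while the eigenvalues of `1 + E` are at least `1/2`.
Hence `|f_{1+E}(x) - f_1(x)| ≤ ε D e^{-|x|²/18}` for a constant `D` depending on `k` only, and
integrating this bound over `ℝᵏ` bounds the difference of the two measures of any Borel set.
-/

open Real
open scoped Nat

variable {n : Type*} [Fintype n]

namespace Matrix

theorem sum_sum_mul_mul_eq_dotProduct_mulVec (M : Matrix n n ℝ) (x : n → ℝ) :
    ∑ i, ∑ j, x i * M i j * x j = x ⬝ᵥ M *ᵥ x := by
  simp only [dotProduct, mulVec, Finset.mul_sum, mul_assoc]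

theorem dotProduct_self_nonneg (x : n → ℝ) : 0 ≤ x ⬝ᵥ x := by
  simpa using dotProduct_star_self_nonneg x

theorem dotProduct_sq_le (x y : n → ℝ) : (x ⬝ᵥ y) ^ 2 ≤ (x ⬝ᵥ x) * (y ⬝ᵥ y) := by
  simpa only [dotProduct, sq] using Finset.sum_mul_sq_le_sq_mul_sq Finset.univ x y

theorem mulVec_dotProduct_mulVec_self_le {E : Matrix n n ℝ} {ε : ℝ} (hE : ∀ i j, |E i j| ≤ ε)
    (x : n → ℝ) : E *ᵥ x ⬝ᵥ E *ᵥ x ≤ (Fintype.card n * ε) ^ 2 * (x ⬝ᵥ x) := by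
  have hrow : ∀ i, E i ⬝ᵥ E i ≤ Fintype.card n * ε ^ 2 := fun i => by
    calc E i ⬝ᵥ E i ≤ ∑ _j : n, ε ^ 2 :=
          Finset.sum_le_sum fun j _ => by
            simpa only [sq, abs_mul_abs_self] using mul_self_le_mul_self (abs_nonneg _) (hE i j)
      _ = Fintype.card n * ε ^ 2 := by simp
  calc E *ᵥ x ⬝ᵥ E *ᵥ x ≤ ∑ i, (E i ⬝ᵥ E i) * (x ⬝ᵥ x) :=
        Finset.sum_le_sum fun i _ => by
          simpa only [mulVec, sq] using dotProduct_sq_le (E i) x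
    _ ≤ ∑ _i : n, Fintype.card n * ε ^ 2 * (x ⬝ᵥ x) :=
        Finset.sum_le_sum fun i _ => mul_le_mul_of_nonneg_right (hrow i) (dotProduct_self_nonneg x)
    _ = (Fintype.card n * ε) ^ 2 * (x ⬝ᵥ x) := by simp; ring

theorem abs_dotProduct_mulVec_le {E : Matrix n n ℝ} {δ : ℝ} (hδ : 0 ≤ δ)
    (hE : ∀ x, E *ᵥ x ⬝ᵥ E *ᵥ x ≤ δ ^ 2 * (x ⬝ᵥ x)) (x : n → ℝ) :
    |x ⬝ᵥ E *ᵥ x| ≤ δ * (x ⬝ᵥ x) := by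
  refine abs_le_of_sq_le_sq ?_ (mul_nonneg hδ (dotProduct_self_nonneg x))
  calc (x ⬝ᵥ E *ᵥ x) ^ 2 ≤ (x ⬝ᵥ x) * (E *ᵥ x ⬝ᵥ E *ᵥ x) := dotProduct_sq_le x _
    _ ≤ (x ⬝ᵥ x) * (δ ^ 2 * (x ⬝ᵥ x)) :=
        mul_le_mul_of_nonneg_left (hE x) (dotProduct_self_nonneg x)
    _ = (δ * (x ⬝ᵥ x)) ^ 2 := by ring

section OneAdd

variable [DecidableEq n] {E : Matrix n n ℝ} {δ : ℝ}

theorem one_sub_mul_le_dotProduct_one_add_mulVec (hδ : 0 ≤ δ)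
    (hE : ∀ x, E *ᵥ x ⬝ᵥ E *ᵥ x ≤ δ ^ 2 * (x ⬝ᵥ x)) (x : n → ℝ) :
    (1 - δ) * (x ⬝ᵥ x) ≤ x ⬝ᵥ (1 + E) *ᵥ x := by
  rw [add_mulVec, one_mulVec, dotProduct_add]
  linarith [neg_abs_le (x ⬝ᵥ E *ᵥ x), abs_dotProduct_mulVec_le hδ hE x]

theorem dotProduct_inv_one_add_mulVec_bounds (hδ : 0 ≤ δ) (hδ' : δ ≤ 1 / 2)
    (hE : ∀ x, E *ᵥ x ⬝ᵥ E *ᵥ x ≤ δ ^ 2 * (x ⬝ᵥ x)) (hdet : IsUnit (1 + E).det) (x : n → ℝ) :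
    2 / 9 * (x ⬝ᵥ x) ≤ x ⬝ᵥ (1 + E)⁻¹ *ᵥ x ∧
      |x ⬝ᵥ (1 + E)⁻¹ *ᵥ x - x ⬝ᵥ x| ≤ 6 * δ * (x ⬝ᵥ x) := by
  obtain ⟨y, rfl⟩ : ∃ y, x = (1 + E) *ᵥ y :=
    ⟨(1 + E)⁻¹ *ᵥ x, by rw [mulVec_mulVec, mul_nonsing_inv _ hdet, one_mulVec]⟩
  rw [mulVec_mulVec, nonsing_inv_mul _ hdet, one_mulVec, add_mulVec, one_mulVec]
  have hxy : (y + E *ᵥ y) ⬝ᵥ y = y ⬝ᵥ y + y ⬝ᵥ E *ᵥ y := by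
    rw [add_dotProduct, dotProduct_comm (E *ᵥ y)]
  have hxx : (y + E *ᵥ y) ⬝ᵥ (y + E *ᵥ y) =
      y ⬝ᵥ y + 2 * (y ⬝ᵥ E *ᵥ y) + E *ᵥ y ⬝ᵥ E *ᵥ y := by
    simp only [add_dotProduct, dotProduct_add, dotProduct_comm (E *ᵥ y) y]
    ring
  have hcs := dotProduct_sq_le (y + E *ᵥ y) y
  have hb := abs_le.mp (abs_dotProduct_mulVec_le hδ hE y)
  have hc := hE y
  have hc₀ := dotProduct_self_nonneg (E *ᵥ y)
  have ha := dotProduct_self_nonneg y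
  rw [hxy, hxx] at hcs ⊢
  generalize y ⬝ᵥ y = a, y ⬝ᵥ E *ᵥ y = b, E *ᵥ y ⬝ᵥ E *ᵥ y = c at *
  have hab : a / 2 ≤ a + b := by nlinarith
  have ha4 : a ≤ 4 * (a + 2 * b + c) := by
    have : (a / 2) ^ 2 ≤ (a + 2 * b + c) * a := (pow_le_pow_left₀ (by positivity) hab 2).trans hcs
    rcases ha.eq_or_lt with rfl | ha <;> nlinarith
  refine ⟨by nlinarith, abs_le.mpr ⟨by nlinarith, by nlinarith⟩⟩

end OneAdd

section Det

variable [DecidableEq n]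

theorem IsHermitian.pow_card_le_det {B : Matrix n n ℝ} (hB : B.IsHermitian) {c : ℝ} (hc : 0 ≤ c)
    (h : ∀ x, c * (x ⬝ᵥ x) ≤ x ⬝ᵥ B *ᵥ x) : c ^ Fintype.card n ≤ B.det := by
  have hev : ∀ i, c ≤ hB.eigenvalues i := fun i => by
    have hv : ⇑(hB.eigenvectorBasis i) ⬝ᵥ ⇑(hB.eigenvectorBasis i) = 1 := by
      have := real_inner_self_eq_norm_sq (hB.eigenvectorBasis i)
      rw [EuclideanSpace.inner_eq_star_dotProduct] at this
      simpa [hB.eigenvectorBasis.orthonormal.1 i] using this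
    simpa [hB.eigenvalues_eq i, hv] using h (hB.eigenvectorBasis i)
  rw [hB.det_eq_prod_eigenvalues]
  calc c ^ Fintype.card n = ∏ _i : n, c := by simp
    _ ≤ ∏ i, hB.eigenvalues i := Finset.prod_le_prod (fun _ _ => hc) fun i _ => hev i

variable {E : Matrix n n ℝ} {ε : ℝ}

theorem abs_prod_one_add_apply_le_of_ne_one (hε : ε ≤ 1) (hdiag : ∀ i, E i i = 0)
    (hE : ∀ i j, |E i j| ≤ ε) {σ : Equiv.Perm n} (hσ : σ ≠ 1) :
    |∏ i, (1 + E) (σ i) i| ≤ ε := by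
  have hoff : ∀ i j, i ≠ j → |(1 + E) i j| ≤ ε := fun i j hij => by
    simpa [one_apply_ne hij] using hE i j
  have hle_one : ∀ i j, |(1 + E) i j| ≤ 1 := fun i j => by
    rcases eq_or_ne i j with rfl | hij
    · simp [hdiag]
    · exact (hoff i j hij).trans hε
  obtain ⟨i, hi⟩ : ∃ i, σ i ≠ i := not_forall.mp fun h => hσ (Equiv.ext h)
  rw [Finset.abs_prod, ← Finset.mul_prod_erase _ _ (Finset.mem_univ i)]
  calc |(1 + E) (σ i) i| * ∏ j ∈ Finset.univ.erase i, |(1 + E) (σ j) j| ≤ ε * 1 :=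
        mul_le_mul (hoff _ _ hi) (Finset.prod_le_one (fun _ _ => abs_nonneg _) fun j _ => hle_one _ _)
          (Finset.prod_nonneg fun _ _ => abs_nonneg _) ((abs_nonneg _).trans (hoff _ _ hi))
    _ = ε := mul_one ε

theorem abs_det_one_add_sub_one_le (hε : ε ≤ 1) (hdiag : ∀ i, E i i = 0)
    (hE : ∀ i j, |E i j| ≤ ε) : |(1 + E).det - 1| ≤ ((Fintype.card n).factorial - 1) * ε := by
  have hdiag_one : ∀ i, (1 + E) i i = 1 := fun i => by simp [hdiag]
  rw [det_apply, ← Finset.add_sum_erase _ _ (Finset.mem_univ 1)]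
  simp only [Equiv.Perm.sign_one, Equiv.Perm.one_apply, one_smul, hdiag_one,
    Finset.prod_const_one, add_sub_cancel_left]
  calc |∑ σ ∈ Finset.univ.erase 1, Equiv.Perm.sign σ • ∏ i, (1 + E) (σ i) i|
      ≤ ∑ σ ∈ Finset.univ.erase (1 : Equiv.Perm n), ε := by
        refine (Finset.abs_sum_le_sum_abs _ _).trans (Finset.sum_le_sum fun σ hσ => ?_)
        have hσ1 := abs_prod_one_add_apply_le_of_ne_one hε hdiag hE (Finset.ne_of_mem_erase hσ)
        rcases Int.units_eq_one_or (Equiv.Perm.sign σ) with h | h <;> simpa [h] using hσ1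
    _ = ((Fintype.card n).factorial - 1) * ε := by
        rw [Finset.sum_const, Finset.card_erase_of_mem (Finset.mem_univ _), Finset.card_univ,
          Fintype.card_perm, nsmul_eq_mul, Nat.cast_sub (Nat.factorial_pos _), Nat.cast_one]

end Det

end Matrix

theorem integrable_exp_neg_dotProduct_self_div {c : ℝ} (hc : 0 < c) :
    Integrable fun x : n → ℝ => exp (-(x ⬝ᵥ x) / c) := by
  have : (fun x : n → ℝ => exp (-(x ⬝ᵥ x) / c)) = fun x => ∏ i, exp (-c⁻¹ * x i ^ 2) := by
    ext x
    rw [← exp_sum, dotProduct, ← Finset.sum_neg_distrib, Finset.sum_div]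
    simp only [sq, div_eq_inv_mul, neg_mul, mul_neg]
  rw [this]
  exact Integrable.fintype_prod fun _ => integrable_exp_neg_mul_sq (inv_pos.2 hc)

theorem abs_setIntegral_sub_le_integral_of_abs_sub_le {α : Type*} [MeasurableSpace α]
    {μ : Measure α} {f g h : α → ℝ} (hf : AEStronglyMeasurable f μ) (hg : Integrable g μ)
    (hh : Integrable h μ) (hfg : ∀ x, |f x - g x| ≤ h x) (s : Set α) :
    |∫ x in s, f x ∂μ - ∫ x in s, g x ∂μ| ≤ ∫ x, h x ∂μ := by
  have hfg_int : Integrable (fun x => f x - g x) μ :=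
    hh.mono' (hf.sub hg.1) (ae_of_all _ hfg)
  have hf_int : Integrable f μ :=
    (hfg_int.add hg).congr (ae_of_all _ fun x => sub_add_cancel (f x) (g x))
  rw [← integral_sub hf_int.integrableOn hg.integrableOn]
  calc |∫ x in s, (f x - g x) ∂μ| ≤ ∫ x in s, |f x - g x| ∂μ := abs_integral_le_integral_abs
    _ ≤ ∫ x in s, h x ∂μ := integral_mono hfg_int.abs.integrableOn hh.integrableOn hfg
    _ ≤ ∫ x, h x ∂μ := setIntegral_le_integral hh (ae_of_all _ fun x => (abs_nonneg _).trans (hfg x))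

theorem abs_inv_sqrt_sub_one_le {d : ℝ} (hd : 0 < d) : |(√d)⁻¹ - 1| ≤ |d - 1| * (√d)⁻¹ := by
  have hs : 0 < √d := sqrt_pos.2 hd
  have hsplit : (√d)⁻¹ - 1 = (1 - √d) * (√d)⁻¹ := by field_simp
  have hd1 : d - 1 = (√d - 1) * (√d + 1) := by nth_rw 1 [← sq_sqrt hd.le]; ring
  rw [hsplit, abs_mul, abs_of_pos (inv_pos.2 hs), abs_sub_comm, hd1, abs_mul,
    abs_of_pos (by linarith : 0 < √d + 1)]
  gcongr
  nlinarith [abs_nonneg (√d - 1)]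

theorem abs_exp_neg_sub_exp_neg_le {a b m : ℝ} (ha : m ≤ a) (hb : m ≤ b) :
    |exp (-a) - exp (-b)| ≤ |a - b| * exp (-m) := by
  wlog hab : a ≤ b generalizing a b
  · rw [abs_sub_comm, abs_sub_comm a]
    exact this hb ha (le_of_not_ge hab)
  rw [abs_of_nonneg (sub_nonneg.2 (exp_le_exp.2 (neg_le_neg hab))), abs_sub_comm,
    abs_of_nonneg (sub_nonneg.2 hab)]
  calc exp (-a) - exp (-b) = exp (-a) * (1 - exp (-(b - a))) := by
        rw [mul_sub, ← exp_add]; ring_nf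
    _ ≤ exp (-a) * (b - a) :=
        mul_le_mul_of_nonneg_left (by linarith [one_sub_le_exp_neg (b - a)]) (exp_pos _).le
    _ ≤ exp (-m) * (b - a) := by gcongr
    _ = (b - a) * exp (-m) := mul_comm _ _

theorem mul_exp_neg_two_mul_le_exp_neg (t : ℝ) : t * exp (-(2 * t)) ≤ exp (-t) :=
  calc t * exp (-(2 * t)) ≤ exp t * exp (-(2 * t)) := by
        gcongr; linarith [add_one_le_exp t]
    _ = exp (-t) := by rw [← exp_add]; ring_nf

theorem abs_gaussDensity_sub_gaussDensity_one_le {k : ℕ} {S : Matrix (Fin k) (Fin k) ℝ}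
    {η δ : ℝ} (hη : |(√S.det)⁻¹ - 1| ≤ η) (hδ : 0 ≤ δ)
    (hlo : ∀ x, 2 / 9 * (x ⬝ᵥ x) ≤ x ⬝ᵥ S⁻¹ *ᵥ x)
    (hdiff : ∀ x, |x ⬝ᵥ S⁻¹ *ᵥ x - x ⬝ᵥ x| ≤ 6 * δ * (x ⬝ᵥ x)) (x : Fin k → ℝ) :
    |gaussDensity k S x - gaussDensity k 1 x| ≤ (η + 54 * δ) * exp (-(x ⬝ᵥ x) / 18) := by
  have hq := dotProduct_self_nonneg x
  have ha := hlo x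
  have hqa := hdiff x
  set q := x ⬝ᵥ x
  set a := x ⬝ᵥ S⁻¹ *ᵥ x
  have hsplit : gaussDensity k S x - gaussDensity k 1 x = (√((2 * π) ^ k))⁻¹ *
      (((√S.det)⁻¹ - 1) * exp (-(a / 2)) + (exp (-(a / 2)) - exp (-(q / 2)))) := by
    simp only [gaussDensity, sum_sum_mul_mul_eq_dotProduct_mulVec, inv_one, one_mulVec, det_one,
      mul_one, sqrt_mul (by positivity : (0 : ℝ) ≤ (2 * π) ^ k), mul_inv, neg_div]
    ring
  have hnormalizer : (√((2 * π) ^ k))⁻¹ ≤ 1 :=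
    inv_le_one_of_one_le₀ (one_le_sqrt.2 (one_le_pow₀ (by linarith [pi_gt_three])))
  have hdecay : exp (-(a / 2)) ≤ exp (-(q / 18)) := exp_le_exp.2 (by linarith)
  have hdet_term : |(√S.det)⁻¹ - 1| * exp (-(a / 2)) ≤ η * exp (-(q / 18)) :=
    mul_le_mul hη hdecay (exp_pos _).le ((abs_nonneg _).trans hη)
  have hexp_term : |exp (-(a / 2)) - exp (-(q / 2))| ≤ 54 * δ * exp (-(q / 18)) :=
    calc _ ≤ |a / 2 - q / 2| * exp (-(q / 9)) :=
          abs_exp_neg_sub_exp_neg_le (by linarith) (by linarith)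
      _ ≤ 3 * δ * q * exp (-(q / 9)) := by
          gcongr
          rw [← sub_div, abs_div, abs_two]
          linarith
      _ = 54 * δ * (q / 18 * exp (-(2 * (q / 18)))) := by ring_nf
      _ ≤ 54 * δ * exp (-(q / 18)) := by
          gcongr
          exact mul_exp_neg_two_mul_le_exp_neg _
  rw [hsplit, abs_mul, abs_of_pos (by positivity), neg_div]
  calc _ ≤ 1 * (|(√S.det)⁻¹ - 1| * exp (-(a / 2)) + |exp (-(a / 2)) - exp (-(q / 2))|) := by
        refine mul_le_mul hnormalizer ?_ (abs_nonneg _) zero_le_one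
        exact (abs_add_le _ _).trans_eq (by rw [abs_mul, abs_of_pos (exp_pos _)])
    _ ≤ (η + 54 * δ) * exp (-(q / 18)) := by linarith

theorem abs_gaussDensity_one_add_sub_gaussDensity_one_le {k : ℕ} {E : Matrix (Fin k) (Fin k) ℝ}
    {ε : ℝ} (hsymm : E.IsSymm) (hdiag : ∀ i, E i i = 0) (hE : ∀ i j, |E i j| ≤ ε) (hε : 0 ≤ ε)
    (hε1 : ε ≤ 1) (hkε : k * ε ≤ 1 / 2) (x : Fin k → ℝ) :
    |gaussDensity k (1 + E) x - gaussDensity k 1 x| ≤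
      ε * ((k ! * √(2 ^ k) + 54 * k) * exp (-(x ⬝ᵥ x) / 18)) := by
  have hkε₀ : 0 ≤ k * ε := by positivity
  have hEE : ∀ y, E *ᵥ y ⬝ᵥ E *ᵥ y ≤ (k * ε) ^ 2 * (y ⬝ᵥ y) := by
    simpa using mulVec_dotProduct_mulVec_self_le hE
  have hlo : ∀ y, 1 / 2 * (y ⬝ᵥ y) ≤ y ⬝ᵥ (1 + E) *ᵥ y := fun y =>
    (mul_le_mul_of_nonneg_right (by linarith) (dotProduct_self_nonneg y)).trans
      (one_sub_mul_le_dotProduct_one_add_mulVec hkε₀ hEE y)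
  have hdet : (1 / 2) ^ k ≤ (1 + E).det := by
    simpa using (isHermitian_one.add (isHermitian_iff_isSymm.2 hsymm)).pow_card_le_det
      (by norm_num) hlo
  have hdet₀ : 0 < (1 + E).det := lt_of_lt_of_le (by positivity) hdet
  have hη : |(√(1 + E).det)⁻¹ - 1| ≤ k ! * √(2 ^ k) * ε := by
    have hinv : (√(1 + E).det)⁻¹ ≤ √(2 ^ k) := by
      rw [← sqrt_inv]
      gcongr
      simpa using inv_anti₀ (by positivity) hdet
    have hdiff := abs_det_one_add_sub_one_le hε1 hdiag hE
    rw [Fintype.card_fin] at hdiff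
    calc |(√(1 + E).det)⁻¹ - 1| ≤ (((k ! : ℝ) - 1) * ε) * √(2 ^ k) := by
          refine (abs_inv_sqrt_sub_one_le hdet₀).trans (mul_le_mul ?_ hinv (by positivity) ?_)
          · exact hdiff
          · exact (abs_nonneg _).trans hdiff
      _ ≤ k ! * √(2 ^ k) * ε := by nlinarith [sqrt_nonneg (2 ^ k : ℝ)]
  have hinv := dotProduct_inv_one_add_mulVec_bounds hkε₀ hkε hEE (isUnit_iff_ne_zero.2 hdet₀.ne')
  calc _ ≤ (k ! * √(2 ^ k) * ε + 54 * (k * ε)) * exp (-(x ⬝ᵥ x) / 18) :=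
        abs_gaussDensity_sub_gaussDensity_one_le hη hkε₀ (fun y => (hinv y).1)
          (fun y => (hinv y).2) x
    _ = _ := by ring

theorem continuous_gaussDensity (k : ℕ) (S : Matrix (Fin k) (Fin k) ℝ) :
    Continuous (gaussDensity k S) := by
  unfold gaussDensity
  fun_prop

theorem integrable_gaussDensity_one (k : ℕ) : Integrable (gaussDensity k 1) := by
  have : gaussDensity k 1 = fun x => (√((2 * π) ^ k))⁻¹ * exp (-(x ⬝ᵥ x) / 2) := by
    ext x
    simp [gaussDensity, sum_sum_mul_mul_eq_dotProduct_mulVec]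
  rw [this]
  exact (integrable_exp_neg_dotProduct_self_div (by norm_num)).const_mul _

theorem stmt17_general (k : ℕ) :
    ∃ C : ℝ, 0 < C ∧
      ∀ ε : ℝ, 0 < ε → ε ≤ 1 / (2 * k) →
        ∀ E : Matrix (Fin k) (Fin k) ℝ, E.IsSymm → (∀ i, E i i = 0) →
          (∀ i j, |E i j| ≤ ε) →
          ∀ S : Set (Fin k → ℝ), Convex ℝ S → MeasurableSet S →
            |(∫ x in S, gaussDensity k (1 + E) x) -
                ∫ x in S, gaussDensity k 1 x| ≤ C * ε := by
  have hJ : 0 < ∫ x : Fin k → ℝ, exp (-(x ⬝ᵥ x) / 18) :=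
    integral_exp_pos (integrable_exp_neg_dotProduct_self_div (by norm_num))
  refine ⟨(k ! * √(2 ^ k) + 54 * k) * ∫ x : Fin k → ℝ, exp (-(x ⬝ᵥ x) / 18), by positivity, ?_⟩
  intro ε hε hεk E hsymm hdiag hE S _ _
  have hk : (1 : ℝ) ≤ k := by
    -- for `k = 0` the hypothesis reads `ε ≤ 1 / 0 = 0`
    rcases Nat.eq_zero_or_pos k with rfl | hk
    · norm_num at hεk
      linarith
    · exact_mod_cast hk
  have hkε : k * ε ≤ 1 / 2 := by
    rw [le_div_iff₀ (by positivity)] at hεk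
    linarith
  calc _ ≤ ∫ x, ε * ((k ! * √(2 ^ k) + 54 * k) * exp (-(x ⬝ᵥ x) / 18)) :=
        abs_setIntegral_sub_le_integral_of_abs_sub_le
          (continuous_gaussDensity k _).aestronglyMeasurable (integrable_gaussDensity_one k)
          (((integrable_exp_neg_dotProduct_self_div (by norm_num)).const_mul _).const_mul ε)
          (abs_gaussDensity_one_add_sub_gaussDensity_one_le hsymm hdiag hE hε.le
            (by nlinarith) hkε) S
    _ = _ := by rw [integral_const_mul, integral_const_mul]; ring

/-- **Quantitative Gaussian comparison on convex sets (ξ = O(ε)).** For every `k ≥ 1`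
there is a constant `C > 0` such that for every `0 < ε ≤ 1/(2k)`, every symmetric matrix
`E` with zero diagonal and entries of absolute value at most `ε`, and every convex Borel
set `S ⊆ ℝᵏ`, `|N(0, I+E)(S) − N(0, I)(S)| ≤ C·ε`, where `N(0,Σ)` is the centered
Gaussian measure with covariance `Σ` (given by its density with respect to Lebesgue
measure). -/
theorem stmt17 (k : ℕ) (hk : 1 ≤ k) :
    ∃ C : ℝ, 0 < C ∧
      ∀ ε : ℝ, 0 < ε → ε ≤ 1 / (2 * k) →
        ∀ E : Matrix (Fin k) (Fin k) ℝ, E.IsSymm → (∀ i, E i i = 0) →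
          (∀ i j, |E i j| ≤ ε) →
          ∀ S : Set (Fin k → ℝ), Convex ℝ S → MeasurableSet S →
            |(∫ x in S, gaussDensity k (1 + E) x) -
                ∫ x in S, gaussDensity k 1 x| ≤ C * ε :=
  stmt17_general k
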